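/- For δ > 0 small enough, the integral ∫₀^δ σ²(τ)/√(1 − r²(τ)) dτ is finite if and only if ∫₀^δ L(τ) dτ is finite (the Geman condition). -/

import Mathlib

/-!
Write `r = specCorr μ`, `A = 1 - r²` and `λ₂ = ∫ l² dμ = -r''(0)`. Differentiating
`-r' / √A = (arccos ∘ r)'` gives, wherever `A > 0`,

  `σ² / √A + (1 - r) r'² / A^{3/2} = (r'' - r''(0)) / √A + (-r' / √A)'`.

Near `0` every term except the derivative is nonnegative, the second one is bounded, and `-r' / √A`
is bounded because `σ² > 0` means `r'² < λ₂ A`. For two nonnegative functions whose difference is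
the derivative of a bounded function, integrability on `(0, δ]` is equivalent, as their integrals
over `[a, δ]` differ by a bounded amount. Finally `A ≍ τ²` near `0` (from above by
`1 - cos x ≤ x² / 2`, from below by `r'² < λ₂ A` and `-r'(τ) ≥ λ₂ τ / 2`), so
`(r'' - r''(0)) / √A ≍ L`.
-/

open MeasureTheory ProbabilityTheory Set Filter Topology Real
open scoped ENNReal NNReal

/-- The correlation function `r(τ) = ∫ cos(λτ) dμ(λ)` associated with a spectral measure `μ`. -/
noncomputable def specCorr (μ : MeasureTheory.Measure ℝ) (τ : ℝ) : ℝ :=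
  ∫ l : ℝ, Real.cos (l * τ) ∂μ

/-- The Geman function `L(τ) = (r''(τ) − r''(0))/τ`. -/
noncomputable def gemanL (μ : MeasureTheory.Measure ℝ) (τ : ℝ) : ℝ :=
  (deriv (deriv (specCorr μ)) τ - deriv (deriv (specCorr μ)) 0) / τ

/-- `σ²(τ) = −r''(0) − r'(τ)²/(1 − r²(τ))`, the conditional variance of `Ẋ₀` given
`X₀` and `X_τ`. -/
noncomputable def sigmaSq (μ : MeasureTheory.Measure ℝ) (τ : ℝ) : ℝ :=
  -(deriv (deriv (specCorr μ)) 0) - (deriv (specCorr μ) τ) ^ 2 / (1 - (specCorr μ τ) ^ 2)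

/-- Condition (1) of Kratz–León: near `0`, `r(τ) = 1 + (r''(0)/2)τ² + θ(τ)` with
`θ(τ) > 0`, `θ(τ)/τ² → 0`, `θ'(τ)/τ → 0` and `θ''(τ) → 0` as `τ → 0⁺`;
`r` is moreover twice differentiable. -/
def ConditionOne (r : ℝ → ℝ) : Prop :=
  (∀ τ : ℝ, DifferentiableAt ℝ r τ ∧ DifferentiableAt ℝ (deriv r) τ) ∧
  ∃ δ₀ > (0:ℝ), ∃ θ : ℝ → ℝ,
    (∀ τ ∈ Set.Ioc (0:ℝ) δ₀,
        r τ = 1 + (deriv (deriv r) 0 / 2) * τ ^ 2 + θ τ ∧ 0 < θ τ) ∧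
    Filter.Tendsto (fun τ => θ τ / τ ^ 2) (nhdsWithin 0 (Set.Ioi 0)) (nhds 0) ∧
    Filter.Tendsto (fun τ => deriv θ τ / τ) (nhdsWithin 0 (Set.Ioi 0)) (nhds 0) ∧
    Filter.Tendsto (fun τ => deriv (deriv θ) τ) (nhdsWithin 0 (Set.Ioi 0)) (nhds 0)

section SpectralCorrelation

variable {μ : Measure ℝ}

lemma integrable_abs_of_integrable_sq [IsFiniteMeasure μ]
    (h2 : Integrable (fun l : ℝ => l ^ 2) μ) : Integrable (fun l : ℝ => |l|) μ :=
  (((memLp_two_iff_integrable_sq aestronglyMeasurable_id).2 h2).integrable one_le_two).abs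

lemma hasDerivAt_specCorr [IsFiniteMeasure μ] (h2 : Integrable (fun l : ℝ => l ^ 2) μ)
    (τ : ℝ) : HasDerivAt (specCorr μ) (∫ l, -(l * sin (l * τ)) ∂μ) τ := by
  have hF' : ∀ x l : ℝ, HasDerivAt (fun x => cos (l * x)) (-(l * sin (l * x))) x := fun x l => by
    simpa [mul_comm] using ((hasDerivAt_id x).const_mul l).cos
  refine (hasDerivAt_integral_of_dominated_loc_of_deriv_le (bound := fun l => |l|) univ_mem
    (.of_forall fun x => by fun_prop) ?_ (by fun_prop) ?_ (integrable_abs_of_integrable_sq h2)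
    (ae_of_all _ fun l x _ => hF' x l)).2
  · exact (integrable_const 1).mono' (by fun_prop)
      (ae_of_all _ fun l => by simpa using abs_cos_le_one (l * τ))
  · exact ae_of_all _ fun l x _ => by
      simpa [abs_mul] using mul_le_of_le_one_right (abs_nonneg l) (abs_sin_le_one (l * x))

lemma deriv_specCorr [IsFiniteMeasure μ] (h2 : Integrable (fun l : ℝ => l ^ 2) μ) :
    deriv (specCorr μ) = fun τ => ∫ l, -(l * sin (l * τ)) ∂μ :=
  funext fun τ => (hasDerivAt_specCorr h2 τ).deriv

lemma hasDerivAt_deriv_specCorr [IsFiniteMeasure μ] (h2 : Integrable (fun l : ℝ => l ^ 2) μ)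
    (τ : ℝ) : HasDerivAt (deriv (specCorr μ)) (∫ l, -(l ^ 2 * cos (l * τ)) ∂μ) τ := by
  have hF' : ∀ x l : ℝ, HasDerivAt (fun x => -(l * sin (l * x))) (-(l ^ 2 * cos (l * x))) x :=
    fun x l =>
      ((((hasDerivAt_id' x).const_mul l).sin.const_mul l).fun_neg).congr_deriv (by ring)
  rw [deriv_specCorr h2]
  refine (hasDerivAt_integral_of_dominated_loc_of_deriv_le (bound := fun l => l ^ 2) univ_mem
    (.of_forall fun x => by fun_prop) ?_ (by fun_prop) ?_ h2
    (ae_of_all _ fun l x _ => hF' x l)).2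
  · exact (integrable_abs_of_integrable_sq h2).mono' (by fun_prop)
      (ae_of_all _ fun l => by
        simpa [abs_mul] using mul_le_of_le_one_right (abs_nonneg l) (abs_sin_le_one (l * τ)))
  · exact ae_of_all _ fun l x _ => by
      simpa [abs_mul] using mul_le_of_le_one_right (sq_nonneg l) (abs_cos_le_one (l * x))

lemma differentiable_specCorr [IsFiniteMeasure μ] (h2 : Integrable (fun l : ℝ => l ^ 2) μ) :
    Differentiable ℝ (specCorr μ) :=
  fun τ => (hasDerivAt_specCorr h2 τ).differentiableAt

lemma differentiable_deriv_specCorr [IsFiniteMeasure μ]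
    (h2 : Integrable (fun l : ℝ => l ^ 2) μ) : Differentiable ℝ (deriv (specCorr μ)) :=
  fun τ => (hasDerivAt_deriv_specCorr h2 τ).differentiableAt

lemma deriv_deriv_specCorr [IsFiniteMeasure μ] (h2 : Integrable (fun l : ℝ => l ^ 2) μ) :
    deriv (deriv (specCorr μ)) = fun τ => ∫ l, -(l ^ 2 * cos (l * τ)) ∂μ :=
  funext fun τ => (hasDerivAt_deriv_specCorr h2 τ).deriv

lemma integrable_sq_mul_cos [IsFiniteMeasure μ] (h2 : Integrable (fun l : ℝ => l ^ 2) μ)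
    (τ : ℝ) : Integrable (fun l => l ^ 2 * cos (l * τ)) μ :=
  h2.mono' (by fun_prop) (ae_of_all _ fun l => by
    simpa [abs_mul] using mul_le_of_le_one_right (sq_nonneg l) (abs_cos_le_one (l * τ)))

lemma continuous_deriv_deriv_specCorr [IsFiniteMeasure μ]
    (h2 : Integrable (fun l : ℝ => l ^ 2) μ) : Continuous (deriv (deriv (specCorr μ))) := by
  rw [deriv_deriv_specCorr h2]
  refine continuous_of_dominated (fun τ => by fun_prop) (fun τ => ae_of_all _ fun l => ?_) h2
    (ae_of_all _ fun l => by fun_prop)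
  simpa [abs_mul] using mul_le_of_le_one_right (sq_nonneg l) (abs_cos_le_one (l * τ))

lemma deriv_specCorr_zero [IsFiniteMeasure μ] (h2 : Integrable (fun l : ℝ => l ^ 2) μ) :
    deriv (specCorr μ) 0 = 0 := by
  simp [deriv_specCorr h2]

lemma deriv_deriv_specCorr_zero [IsFiniteMeasure μ] (h2 : Integrable (fun l : ℝ => l ^ 2) μ) :
    deriv (deriv (specCorr μ)) 0 = -∫ l, l ^ 2 ∂μ := by
  simp [deriv_deriv_specCorr h2, integral_neg]

lemma deriv_deriv_specCorr_zero_le [IsFiniteMeasure μ] (h2 : Integrable (fun l : ℝ => l ^ 2) μ)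
    (τ : ℝ) : deriv (deriv (specCorr μ)) 0 ≤ deriv (deriv (specCorr μ)) τ := by
  rw [deriv_deriv_specCorr h2]
  refine integral_mono (integrable_sq_mul_cos h2 0).neg (integrable_sq_mul_cos h2 τ).neg
    fun l => ?_
  simpa using mul_le_of_le_one_right (sq_nonneg l) (cos_le_one (l * τ))

lemma integrable_cos_mul [IsFiniteMeasure μ] (τ : ℝ) : Integrable (fun l : ℝ => cos (l * τ)) μ :=
  (integrable_const 1).mono' (by fun_prop) (ae_of_all _ fun l => by simpa using abs_cos_le_one _)

lemma one_sub_specCorr_eq_integral [IsProbabilityMeasure μ] (τ : ℝ) :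
    1 - specCorr μ τ = ∫ l, (1 - cos (l * τ)) ∂μ := by
  rw [integral_sub (integrable_const 1) (integrable_cos_mul τ)]
  simp [specCorr]

lemma specCorr_le_one [IsProbabilityMeasure μ] (τ : ℝ) : specCorr μ τ ≤ 1 := by
  have : 0 ≤ 1 - specCorr μ τ := by
    rw [one_sub_specCorr_eq_integral]
    exact integral_nonneg fun l => sub_nonneg.2 (cos_le_one _)
  linarith

lemma one_sub_specCorr_le [IsProbabilityMeasure μ] (h2 : Integrable (fun l : ℝ => l ^ 2) μ)
    (τ : ℝ) : 1 - specCorr μ τ ≤ (∫ l, l ^ 2 ∂μ) * τ ^ 2 / 2 := by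
  rw [one_sub_specCorr_eq_integral, ← integral_mul_const, ← integral_div]
  refine integral_mono ((integrable_const 1).sub (integrable_cos_mul τ))
    ((h2.mul_const _).div_const _) fun l => ?_
  have := one_sub_sq_div_two_le_cos (x := l * τ)
  linarith [show (l * τ) ^ 2 = l ^ 2 * τ ^ 2 by ring]

end SpectralCorrelation

section ImproperIntegral

variable {f g Ψ : ℝ → ℝ} {a b C : ℝ}

lemma setIntegral_Ioc_eq_add_of_hasDerivAt_sub (hf : IntegrableOn f (Ioc a b))
    (hg : IntegrableOn g (Ioc a b)) (hΨ : ∀ t ∈ Icc a b, HasDerivAt Ψ (f t - g t) t)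
    (hab : a ≤ b) : ∫ t in Ioc a b, f t = (∫ t in Ioc a b, g t) + (Ψ b - Ψ a) := by
  have hfi : IntervalIntegrable f volume a b :=
    (intervalIntegrable_iff_integrableOn_Ioc_of_le hab).2 hf
  have hgi : IntervalIntegrable g volume a b :=
    (intervalIntegrable_iff_integrableOn_Ioc_of_le hab).2 hg
  rw [← intervalIntegral.integral_of_le hab, ← intervalIntegral.integral_of_le hab,
    ← intervalIntegral.integral_eq_sub_of_hasDerivAt (by rwa [uIcc_of_le hab]) (hfi.sub hgi),
    intervalIntegral.integral_sub hfi hgi]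
  ring

lemma integrableOn_Ioc_of_hasDerivAt_sub (hf : ContinuousOn f (Ioc a b))
    (hf₀ : ∀ t ∈ Ioc a b, 0 ≤ f t) (hg : IntegrableOn g (Ioc a b)) (hg₀ : ∀ t ∈ Ioc a b, 0 ≤ g t)
    (hΨ : ∀ t ∈ Ioc a b, HasDerivAt Ψ (f t - g t) t) (hΨC : ∀ t ∈ Ioc a b, |Ψ t| ≤ C) :
    IntegrableOn f (Ioc a b) := by
  rcases le_or_gt b a with hba | hab
  · simp [Ioc_eq_empty_of_le hba]
  have hsub : ∀ x ∈ Ioc a b, Icc x b ⊆ Ioc a b := fun x hx t ht => ⟨hx.1.trans_le ht.1, ht.2⟩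
  have hfi : ∀ x ∈ Ioc a b, IntegrableOn f (Ioc x b) := fun x hx =>
    ((hf.mono (hsub x hx)).integrableOn_Icc).mono_set Ioc_subset_Icc_self
  have hbound : ∀ x ∈ Ioc a b, ∫ t in Ioc x b, ‖f t‖ ≤ (∫ t in Ioc a b, g t) + 2 * C := by
    intro x hx
    have hxb : Ioc x b ⊆ Ioc a b := Ioc_subset_Ioc_left hx.1.le
    calc ∫ t in Ioc x b, ‖f t‖ = ∫ t in Ioc x b, f t :=
          setIntegral_congr_fun measurableSet_Ioc fun t ht =>
            Real.norm_of_nonneg (hf₀ t (hxb ht))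
      _ = (∫ t in Ioc x b, g t) + (Ψ b - Ψ x) :=
          setIntegral_Ioc_eq_add_of_hasDerivAt_sub (hfi x hx) (hg.mono_set hxb)
            (fun t ht => hΨ t (hsub x hx ht)) hx.2
      _ ≤ (∫ t in Ioc a b, g t) + 2 * C := by
          gcongr ?_ + ?_
          · exact setIntegral_mono_set hg ((ae_restrict_iff' measurableSet_Ioc).2
              (ae_of_all _ hg₀)) hxb.eventuallyLE
          · linarith [(abs_le.1 (hΨC b ⟨hab, le_rfl⟩)).2, (abs_le.1 (hΨC x hx)).1]
  set x : ℕ → ℝ := fun n => a + (b - a) * (1 / (n + 1))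
  have hx : ∀ n, x n ∈ Ioc a b := fun n => by
    refine ⟨lt_add_of_pos_right _ (by positivity), ?_⟩
    have : 1 / ((n : ℝ) + 1) ≤ 1 :=
      div_le_one_of_le₀ (by linarith [n.cast_nonneg (α := ℝ)]) (by positivity)
    nlinarith
  refine integrableOn_Ioc_of_intervalIntegral_norm_bounded_left (l := atTop)
    (fun n => hfi _ (hx n)) ?_
    (.of_forall fun n => hbound _ (hx n))
  simpa [x] using (tendsto_one_div_add_atTop_nhds_zero_nat.const_mul (b - a)).const_add a

theorem integrableOn_Ioc_iff_of_hasDerivAt_sub (hf : ContinuousOn f (Ioc a b))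
    (hg : ContinuousOn g (Ioc a b)) (hf₀ : ∀ t ∈ Ioc a b, 0 ≤ f t)
    (hg₀ : ∀ t ∈ Ioc a b, 0 ≤ g t) (hΨ : ∀ t ∈ Ioc a b, HasDerivAt Ψ (f t - g t) t)
    (hΨC : ∀ t ∈ Ioc a b, |Ψ t| ≤ C) :
    IntegrableOn f (Ioc a b) ↔ IntegrableOn g (Ioc a b) :=
  ⟨fun hfi => integrableOn_Ioc_of_hasDerivAt_sub hg hg₀ hfi hf₀
      (fun t ht => by simpa using (hΨ t ht).neg) (fun t ht => by simpa using hΨC t ht),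
    fun hgi => integrableOn_Ioc_of_hasDerivAt_sub hf hf₀ hgi hg₀ hΨ hΨC⟩

end ImproperIntegral

lemma hasDerivAt_neg_div_sqrt_one_sub_sq {r r' : ℝ → ℝ} {r'' t : ℝ}
    (hr : HasDerivAt r (r' t) t) (hr' : HasDerivAt r' r'' t) (hA : 0 < 1 - r t ^ 2) :
    HasDerivAt (fun s => -r' s / √(1 - r s ^ 2))
      (-(r'' * (1 - r t ^ 2) + r t * r' t ^ 2) / ((1 - r t ^ 2) * √(1 - r t ^ 2))) t := by
  have hsqrt := ((hr.fun_pow 2).const_sub 1).sqrt hA.ne'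
  have hs : 0 < √(1 - r t ^ 2) := Real.sqrt_pos.2 hA
  refine (hr'.fun_neg.div hsqrt hs.ne').congr_deriv ?_
  field_simp
  rw [Real.sq_sqrt hA.le]
  ring

lemma integrableOn_div_sqrt_iff_div {K A : ℝ → ℝ} {s : Set ℝ} {c C : ℝ} (hs : MeasurableSet s)
    (hK : ContinuousOn K s) (hA : ContinuousOn A s) (hc : 0 < c)
    (hbounds : ∀ t ∈ s, 0 < t ∧ c * t ^ 2 ≤ A t ∧ A t ≤ C * t ^ 2) :
    IntegrableOn (fun t => K t / √(A t)) s ↔ IntegrableOn (fun t => K t / t) s := by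
  have hApos : ∀ t ∈ s, 0 < A t := fun t ht =>
    lt_of_lt_of_le (by have := (hbounds t ht).1; positivity) (hbounds t ht).2.1
  have hsqrt_lo : ∀ t ∈ s, √c * t ≤ √(A t) := fun t ht => by
    rw [Real.le_sqrt (by have := (hbounds t ht).1; positivity) (hApos t ht).le, mul_pow,
      Real.sq_sqrt hc.le]
    exact (hbounds t ht).2.1
  have hsqrt_hi : ∀ t ∈ s, √(A t) ≤ √C * t := fun t ht => by
    have hC : 0 ≤ C := by nlinarith [hbounds t ht, hApos t ht]
    rw [Real.sqrt_le_left (by have := (hbounds t ht).1; positivity), mul_pow, Real.sq_sqrt hC]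
    exact (hbounds t ht).2.2
  have hmeas₁ : AEStronglyMeasurable (fun t => K t / √(A t)) (volume.restrict s) :=
    (hK.div (Real.continuous_sqrt.comp_continuousOn hA)
      fun t ht => (Real.sqrt_pos.2 (hApos t ht)).ne').aestronglyMeasurable hs
  have hmeas₂ : AEStronglyMeasurable (fun t => K t / t) (volume.restrict s) :=
    (hK.div continuousOn_id fun t ht => (hbounds t ht).1.ne').aestronglyMeasurable hs
  constructor
  · refine fun h => (h.norm.const_mul √C).mono' hmeas₂
      ((ae_restrict_iff' hs).2 (ae_of_all _ fun t ht => ?_))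
    have ht0 := (hbounds t ht).1
    have hsA := Real.sqrt_pos.2 (hApos t ht)
    have hC : 0 < √C := (mul_pos_iff_of_pos_right ht0).1 (hsA.trans_le (hsqrt_hi t ht))
    rw [Real.norm_eq_abs, Real.norm_eq_abs, abs_div, abs_div, abs_of_pos ht0, abs_of_pos hsA]
    calc |K t| / t = √C * (|K t| / (√C * t)) := by field_simp
      _ ≤ √C * (|K t| / √(A t)) := mul_le_mul_of_nonneg_left
          (div_le_div_of_nonneg_left (abs_nonneg _) hsA (hsqrt_hi t ht)) hC.le
  · refine fun h => (h.norm.const_mul (1 / √c)).mono' hmeas₁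
      ((ae_restrict_iff' hs).2 (ae_of_all _ fun t ht => ?_))
    have ht0 := (hbounds t ht).1
    have hsA := Real.sqrt_pos.2 (hApos t ht)
    rw [Real.norm_eq_abs, Real.norm_eq_abs, abs_div, abs_div, abs_of_pos ht0, abs_of_pos hsA]
    calc |K t| / √(A t) ≤ |K t| / (√c * t) :=
          div_le_div_of_nonneg_left (abs_nonneg _) (by positivity) (hsqrt_lo t ht)
      _ = 1 / √c * (|K t| / t) := by field_simp

section GemanCondition

variable {μ : Measure ℝ}

lemma sq_deriv_specCorr_lt_of_sigmaSq_pos [IsFiniteMeasure μ]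
    (h2 : Integrable (fun l : ℝ => l ^ 2) μ) {τ : ℝ} (hA : 0 < 1 - specCorr μ τ ^ 2)
    (hσ : 0 < sigmaSq μ τ) :
    deriv (specCorr μ) τ ^ 2 < (∫ l, l ^ 2 ∂μ) * (1 - specCorr μ τ ^ 2) := by
  rwa [sigmaSq, deriv_deriv_specCorr_zero h2, neg_neg, sub_pos, div_lt_iff₀ hA] at hσ

lemma one_sub_specCorr_sq_le [IsProbabilityMeasure μ] (h2 : Integrable (fun l : ℝ => l ^ 2) μ)
    (τ : ℝ) : 1 - specCorr μ τ ^ 2 ≤ (∫ l, l ^ 2 ∂μ) * τ ^ 2 := by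
  nlinarith [one_sub_specCorr_le h2 τ, specCorr_le_one (μ := μ) τ]

lemma mul_sq_div_four_lt_one_sub_specCorr_sq [IsFiniteMeasure μ]
    (h2 : Integrable (fun l : ℝ => l ^ 2) μ) (hm : 0 < ∫ l, l ^ 2 ∂μ) {τ : ℝ}
    (hτ : 0 ≤ τ) (hA : 0 < 1 - specCorr μ τ ^ 2) (hσ : 0 < sigmaSq μ τ)
    (hslope : (∫ l, l ^ 2 ∂μ) * τ / 2 ≤ -deriv (specCorr μ) τ) :
    (∫ l, l ^ 2 ∂μ) * τ ^ 2 / 4 < 1 - specCorr μ τ ^ 2 := by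
  have hlt := sq_deriv_specCorr_lt_of_sigmaSq_pos h2 hA hσ
  have hsq := pow_le_pow_left₀ (by positivity) hslope 2
  nlinarith

lemma exists_forall_mul_le_neg_deriv_specCorr [IsFiniteMeasure μ]
    (h2 : Integrable (fun l : ℝ => l ^ 2) μ) (hm : 0 < ∫ l, l ^ 2 ∂μ) :
    ∃ δ > 0, ∀ t ∈ Ioc 0 δ, (∫ l, l ^ 2 ∂μ) * t / 2 ≤ -deriv (specCorr μ) t := by
  have hr' := differentiable_deriv_specCorr h2
  have hnear : ∀ᶠ s in 𝓝 0, deriv (deriv (specCorr μ)) s < -(∫ l, l ^ 2 ∂μ) / 2 :=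
    (continuous_deriv_deriv_specCorr h2).continuousAt.eventually_lt continuousAt_const
      (by rw [deriv_deriv_specCorr_zero h2]; linarith)
  obtain ⟨ε, hε, hball⟩ := Metric.eventually_nhds_iff.1 hnear
  refine ⟨ε / 2, half_pos hε, fun t ht => ?_⟩
  obtain ⟨ξ, hξ, hslope⟩ := exists_hasDerivAt_eq_slope (deriv (specCorr μ))
    (deriv (deriv (specCorr μ))) ht.1 hr'.continuous.continuousOn
    fun x _ => (hr' x).hasDerivAt
  have := hball (show dist ξ 0 < ε by
    rw [Real.dist_eq, sub_zero, abs_of_pos hξ.1]; linarith [hξ.2, ht.2])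
  rw [hslope, deriv_specCorr_zero h2, sub_zero, sub_zero, div_lt_iff₀ ht.1] at this
  linarith

lemma one_sub_specCorr_mul_sq_deriv_div_le [IsProbabilityMeasure μ]
    (h2 : Integrable (fun l : ℝ => l ^ 2) μ) {τ : ℝ} (hA : 0 < 1 - specCorr μ τ ^ 2)
    (hσ : 0 < sigmaSq μ τ) (hA_lo : (∫ l, l ^ 2 ∂μ) * τ ^ 2 / 4 < 1 - specCorr μ τ ^ 2) :
    (1 - specCorr μ τ) * deriv (specCorr μ) τ ^ 2 /
        ((1 - specCorr μ τ ^ 2) * √(1 - specCorr μ τ ^ 2)) ≤ 2 * ∫ l, l ^ 2 ∂μ := by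
  have hm : 0 ≤ ∫ l, l ^ 2 ∂μ := integral_nonneg fun l => sq_nonneg l
  have h1r : 1 - specCorr μ τ ≤ 2 * (1 - specCorr μ τ ^ 2) := by
    linarith [one_sub_specCorr_le h2 τ]
  have hA_le : 1 - specCorr μ τ ^ 2 ≤ √(1 - specCorr μ τ ^ 2) :=
    (Real.le_sqrt hA.le hA.le).2 (by nlinarith [sq_nonneg (specCorr μ τ)])
  rw [div_le_iff₀ (mul_pos hA (Real.sqrt_pos.2 hA))]
  calc (1 - specCorr μ τ) * deriv (specCorr μ) τ ^ 2
      ≤ 2 * (1 - specCorr μ τ ^ 2) * ((∫ l, l ^ 2 ∂μ) * (1 - specCorr μ τ ^ 2)) :=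
        mul_le_mul h1r (sq_deriv_specCorr_lt_of_sigmaSq_pos h2 hA hσ).le (sq_nonneg _)
          (by positivity)
    _ = 2 * (∫ l, l ^ 2 ∂μ) * ((1 - specCorr μ τ ^ 2) * (1 - specCorr μ τ ^ 2)) := by ring
    _ ≤ 2 * (∫ l, l ^ 2 ∂μ) * ((1 - specCorr μ τ ^ 2) * √(1 - specCorr μ τ ^ 2)) := by gcongr

lemma hasDerivAt_neg_deriv_specCorr_div_sqrt [IsFiniteMeasure μ]
    (h2 : Integrable (fun l : ℝ => l ^ 2) μ) {τ : ℝ} (hA : 0 < 1 - specCorr μ τ ^ 2) :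
    HasDerivAt (fun t => -deriv (specCorr μ) t / √(1 - specCorr μ t ^ 2))
      (sigmaSq μ τ / √(1 - specCorr μ τ ^ 2) + (1 - specCorr μ τ) * deriv (specCorr μ) τ ^ 2 /
          ((1 - specCorr μ τ ^ 2) * √(1 - specCorr μ τ ^ 2)) -
        (deriv (deriv (specCorr μ)) τ - deriv (deriv (specCorr μ)) 0) /
          √(1 - specCorr μ τ ^ 2)) τ := by
  refine (hasDerivAt_neg_div_sqrt_one_sub_sq (differentiable_specCorr h2 τ).hasDerivAt
    (differentiable_deriv_specCorr h2 τ).hasDerivAt hA).congr_deriv ?_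
  have := (Real.sqrt_pos.2 hA).ne'
  rw [sigmaSq]
  field_simp
  ring

theorem integrableOn_sigmaSq_div_sqrt_iff [IsProbabilityMeasure μ]
    (h2 : Integrable (fun l : ℝ => l ^ 2) μ) {δ : ℝ}
    (hσ : ∀ t ∈ Ioc 0 δ, 0 < 1 - specCorr μ t ^ 2 ∧ 0 < sigmaSq μ t)
    (hA_lo : ∀ t ∈ Ioc 0 δ, (∫ l, l ^ 2 ∂μ) * t ^ 2 / 4 < 1 - specCorr μ t ^ 2) :
    IntegrableOn (fun t => sigmaSq μ t / √(1 - specCorr μ t ^ 2)) (Ioc 0 δ) ↔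
      IntegrableOn (fun t => (deriv (deriv (specCorr μ)) t - deriv (deriv (specCorr μ)) 0) /
        √(1 - specCorr μ t ^ 2)) (Ioc 0 δ) := by
  set e := fun t => (1 - specCorr μ t) * deriv (specCorr μ) t ^ 2 /
    ((1 - specCorr μ t ^ 2) * √(1 - specCorr μ t ^ 2))
  have hr := (differentiable_specCorr h2).continuous.continuousOn (s := Ioc 0 δ)
  have hr' := (differentiable_deriv_specCorr h2).continuous.continuousOn (s := Ioc 0 δ)
  have hr'' := (continuous_deriv_deriv_specCorr h2).continuousOn (s := Ioc 0 δ)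
  have hA : ∀ t ∈ Ioc 0 δ, 1 - specCorr μ t ^ 2 ≠ 0 := fun t ht => (hσ t ht).1.ne'
  have hs : ∀ t ∈ Ioc 0 δ, √(1 - specCorr μ t ^ 2) ≠ 0 :=
    fun t ht => (Real.sqrt_pos.2 (hσ t ht).1).ne'
  have hAs : ∀ t ∈ Ioc 0 δ, (1 - specCorr μ t ^ 2) * √(1 - specCorr μ t ^ 2) ≠ 0 :=
    fun t ht => mul_ne_zero (hA t ht) (hs t ht)
  have he₀ : ∀ t ∈ Ioc 0 δ, 0 ≤ e t := fun t ht =>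
    div_nonneg (mul_nonneg (sub_nonneg.2 (specCorr_le_one t)) (sq_nonneg _))
      (mul_nonneg (hσ t ht).1.le (Real.sqrt_nonneg _))
  have he : IntegrableOn e (Ioc 0 δ) :=
    (integrableOn_const (C := 2 * ∫ l, l ^ 2 ∂μ) measure_Ioc_lt_top.ne).mono'
      ((by fun_prop (disch := assumption) : ContinuousOn e (Ioc 0 δ)).aestronglyMeasurable
        measurableSet_Ioc)
      ((ae_restrict_iff' measurableSet_Ioc).2 (ae_of_all _ fun t ht => by
        rw [Real.norm_of_nonneg (he₀ t ht)]
        exact one_sub_specCorr_mul_sq_deriv_div_le h2 (hσ t ht).1 (hσ t ht).2 (hA_lo t ht)))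
  rw [← integrableOn_Ioc_iff_of_hasDerivAt_sub (C := √(∫ l, l ^ 2 ∂μ))
    (by unfold sigmaSq; fun_prop (disch := assumption)) (by fun_prop (disch := assumption))
    (fun t ht => add_nonneg (div_nonneg (hσ t ht).2.le (Real.sqrt_nonneg _)) (he₀ t ht))
    (fun t ht => div_nonneg (sub_nonneg.2 (deriv_deriv_specCorr_zero_le h2 t))
      (Real.sqrt_nonneg _))
    (fun t ht => hasDerivAt_neg_deriv_specCorr_div_sqrt h2 (hσ t ht).1)
    (fun t ht => Real.abs_le_sqrt (by
      rw [div_pow, Real.sq_sqrt (hσ t ht).1.le, neg_sq, div_le_iff₀ (hσ t ht).1]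
      exact (sq_deriv_specCorr_lt_of_sigmaSq_pos h2 (hσ t ht).1 (hσ t ht).2).le))]
  exact ⟨fun h => h.add he,
    fun h => (h.sub he).congr_fun (fun t _ => add_sub_cancel_right _ _) measurableSet_Ioc⟩

end GemanCondition

theorem sigmaSq_integrable_iff_geman_general
    (μ : Measure ℝ) [IsProbabilityMeasure μ]
    (hlam2fin : Integrable (fun l : ℝ => l ^ 2) μ)
    (hlam2pos : 0 < ∫ l : ℝ, l ^ 2 ∂μ)
    (hpos : ∃ δ₁ > (0:ℝ), ∀ τ ∈ Set.Ioc (0:ℝ) δ₁,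
      0 < 1 - (specCorr μ τ) ^ 2 ∧ 0 < sigmaSq μ τ) :
    ∃ δ₀ > (0:ℝ), ∀ δ : ℝ, 0 < δ → δ ≤ δ₀ →
      (IntegrableOn (fun τ => sigmaSq μ τ / Real.sqrt (1 - (specCorr μ τ) ^ 2))
          (Set.Ioc 0 δ) volume
        ↔ IntegrableOn (gemanL μ) (Set.Ioc 0 δ) volume) := by
  obtain ⟨δ₁, hδ₁, hσ⟩ := hpos
  obtain ⟨δ₂, hδ₂, hslope⟩ := exists_forall_mul_le_neg_deriv_specCorr hlam2fin hlam2pos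
  refine ⟨min δ₁ δ₂, lt_min hδ₁ hδ₂, fun δ _ hδ => ?_⟩
  have hσ' : ∀ t ∈ Ioc 0 δ, 0 < 1 - specCorr μ t ^ 2 ∧ 0 < sigmaSq μ t :=
    fun t ht => hσ t ⟨ht.1, ht.2.trans (hδ.trans (min_le_left _ _))⟩
  have hA : ∀ t ∈ Ioc 0 δ, (∫ l, l ^ 2 ∂μ) * t ^ 2 / 4 < 1 - specCorr μ t ^ 2 :=
    fun t ht => mul_sq_div_four_lt_one_sub_specCorr_sq hlam2fin hlam2pos ht.1.le (hσ' t ht).1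
      (hσ' t ht).2 (hslope t ⟨ht.1, ht.2.trans (hδ.trans (min_le_right _ _))⟩)
  rw [integrableOn_sigmaSq_div_sqrt_iff hlam2fin hσ' hA]
  have hr := (differentiable_specCorr hlam2fin).continuous
  have hr'' := continuous_deriv_deriv_specCorr hlam2fin
  exact integrableOn_div_sqrt_iff_div measurableSet_Ioc (by fun_prop) (by fun_prop)
    (by positivity : 0 < (∫ l, l ^ 2 ∂μ) / 4)
    fun t ht => ⟨ht.1, by linarith [hA t ht], one_sub_specCorr_sq_le hlam2fin t⟩

/-- for `δ > 0` small enough, `∫₀^δ σ²(τ)/√(1 − r²(τ)) dτ < ∞` iff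
`∫₀^δ L(τ) dτ < ∞` (the Geman condition). -/
theorem sigmaSq_integrable_iff_geman
    (μ : Measure ℝ) [IsProbabilityMeasure μ]
    (hsymm : Measure.map (fun l => -l) μ = μ)
    (hlam2fin : Integrable (fun l : ℝ => l ^ 2) μ)
    (hlam2pos : 0 < ∫ l : ℝ, l ^ 2 ∂μ)
    (hsupp : ∀ a b : ℝ, μ ({a, b}ᶜ) ≠ 0)
    (hcond1 : ConditionOne (specCorr μ))
    (hpos : ∃ δ₁ > (0:ℝ), ∀ τ ∈ Set.Ioc (0:ℝ) δ₁,
      0 < 1 - (specCorr μ τ) ^ 2 ∧ 0 < sigmaSq μ τ) :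
    ∃ δ₀ > (0:ℝ), ∀ δ : ℝ, 0 < δ → δ ≤ δ₀ →
      (IntegrableOn (fun τ => sigmaSq μ τ / Real.sqrt (1 - (specCorr μ τ) ^ 2))
          (Set.Ioc 0 δ) volume
        ↔ IntegrableOn (gemanL μ) (Set.Ioc 0 δ) volume) :=
  sigmaSq_integrable_iff_geman_general μ hlam2fin hlam2pos hpos
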